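/- Let d be a squarefree integer and k a positive cubefree integer. Then -432·d³·k² is a perfect cube (i.e., there exists an integer b with -432·d³·k² = b³) if and only if k = 2. -/

import Mathlib

/-!
Dividing out the cube `d³` (and then `6³`, as `432 = 2·6³`) shows that `-432·d³·k²` is a cube
exactly when `2·k²` is. Comparing `p`-adic valuations, `vₚ(2) + 2·vₚ(k) ≡ 0 (mod 3)` with
`vₚ(2) ≤ 1` and `vₚ(k) ≤ 2` forces `vₚ(k) = vₚ(2)` for every prime `p`.
-/

theorem exists_pow_eq_of_mul_pow_eq_pow {R : Type*} [CommRing R] [IsDomain R]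
    [IsIntegrallyClosed R] {n : ℕ} (hn : n ≠ 0) {a b c : R} (hc : c ≠ 0)
    (h : a * c ^ n = b ^ n) : ∃ e, a = e ^ n := by
  obtain ⟨e, rfl⟩ : c ∣ b := (IsIntegrallyClosed.pow_dvd_pow_iff hn).mp ⟨a, by rw [← h, mul_comm]⟩
  refine ⟨e, mul_right_cancel₀ (pow_ne_zero n hc) ?_⟩
  rw [h, mul_pow, mul_comm]

theorem Nat.factorization_le_two_of_cubefree {k : ℕ} (hk : k ≠ 0)
    (hkcf : ∀ p : ℕ, p.Prime → ¬ p ^ 3 ∣ k) (p : ℕ) : k.factorization p ≤ 2 := by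
  by_cases hp : p.Prime
  · by_contra! h
    exact hkcf p hp ((hp.pow_dvd_iff_le_factorization hk).mpr h)
  · simp [Nat.factorization_eq_zero_of_not_prime _ hp]

theorem Nat.eq_of_squarefree_mul_sq_eq_cube {a k m : ℕ} (ha : Squarefree a) (hk : k ≠ 0)
    (hkcf : ∀ p : ℕ, p.Prime → ¬ p ^ 3 ∣ k) (h : a * k ^ 2 = m ^ 3) : k = a := by
  have hm : m ≠ 0 := by
    rintro rfl
    simp [ha.ne_zero, hk] at h
  refine Nat.eq_of_factorization_eq hk ha.ne_zero fun p ↦ ?_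
  have hval : a.factorization p + 2 * k.factorization p = 3 * m.factorization p := by
    simpa [Nat.factorization_mul ha.ne_zero (pow_ne_zero 2 hk)] using
      congrArg (·.factorization p) h
  have := ha.natFactorization_le_one p
  have := Nat.factorization_le_two_of_cubefree hk hkcf p
  omega

/-- For a squarefree integer `d` and a positive cubefree integer `k`, the integer
`-432·d³·k²` is a perfect cube if and only if `k = 2`. -/
theorem cube_iff (d : ℤ) (hd : Squarefree d) (k : ℕ) (hk : 0 < k)
    (hkcf : ∀ p : ℕ, p.Prime → ¬ p ^ 3 ∣ k) :
    (∃ b : ℤ, -432 * d ^ 3 * (k : ℤ) ^ 2 = b ^ 3) ↔ k = 2 := by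
  constructor
  · rintro ⟨b, hb⟩
    obtain ⟨e, he⟩ := exists_pow_eq_of_mul_pow_eq_pow three_ne_zero hd.ne_zero
      (a := -432 * (k : ℤ) ^ 2) (by rw [← hb]; ring)
    obtain ⟨f, hf⟩ := exists_pow_eq_of_mul_pow_eq_pow three_ne_zero (by norm_num : (6 : ℤ) ≠ 0)
      (a := -2 * (k : ℤ) ^ 2) (by rw [← he]; ring)
    have h2k : 2 * k ^ 2 = f.natAbs ^ 3 := by
      simpa [Int.natAbs_mul, Int.natAbs_pow] using congrArg Int.natAbs hf
    exact Nat.eq_of_squarefree_mul_sq_eq_cube Nat.squarefree_two hk.ne' hkcf h2k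
  · rintro rfl
    exact ⟨-12 * d, by push_cast; ring⟩
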